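/- Let H be a finite group, let c ≥ 1 be an integer, let A = (Z/2Z)^c act on the direct product K = ∏_{v ∈ A} H of 2^c copies of H by translating the coordinates (the regular permutation action of A on itself), and let G = K ⋊ A be the corresponding wreath product H ≀ A. If R is a radical 2-subgroup of G whose image under the canonical projection G → A is all of A (equivalently, R meets every coset of K in G), then there exist g ∈ G and a radical 2-subgroup R' of H such that gRg⁻¹ is the subgroup {(f, a) ∈ K ⋊ A : f(v) ∈ R' for all v ∈ A}, i.e., gRg⁻¹ = (R')^{2^c} ⋊ A. -/

import Mathlib

/-- The largest normal `p`-subgroup `O_p(G)` of a group `G`: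
the join of all normal `p`-subgroups of `G`. -/
def pCore' (p : ℕ) (G : Type*) [Group G] : Subgroup G :=
  sSup {H : Subgroup G | H.Normal ∧ IsPGroup p H}

/-- `Q` is a radical `p`-subgroup of `G` if `Q = O_p(N_G(Q))`. -/
def IsRadicalPSubgroup (p : ℕ) {G : Type*} [Group G] (Q : Subgroup G) : Prop :=
  Q.subgroupOf (Subgroup.normalizer (Q : Set G)) = pCore' p (Subgroup.normalizer (Q : Set G))

/-- The elementary abelian group `(Z/2Z)^c`. -/
abbrev EA (c : ℕ) : Type := Fin c → Multiplicative (ZMod 2)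

/-- The regular (translation) action of `A = (Z/2Z)^c` on the direct product
`∏_{v ∈ A} H`, permuting the coordinates. -/
def wreathAct (H : Type*) [Group H] (c : ℕ) : EA c →* MulAut (EA c → H) where
  toFun a :=
    { toFun := fun f v => f (a⁻¹ * v)
      invFun := fun f v => f (a * v)
      left_inv := fun f => funext fun v => by simp
      right_inv := fun f => funext fun v => by simp
      map_mul' := fun f g => rfl }
  map_one' := by
    apply MulEquiv.ext
    intro f
    funext v
    simp
  map_mul' := fun a b => by
    apply MulEquiv.ext
    intro f
    funext v
    simp [mul_assoc]

/-- The regular wreath product `H ≀ (Z/2Z)^c = (∏_{v ∈ A} H) ⋊ A`. -/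
abbrev WreathProd (H : Type*) [Group H] (c : ℕ) : Type _ :=
  SemidirectProduct (EA c → H) (EA c) (wreathAct H c)

/-- For a subgroup `R'` of `H`, the subgroup `(R')^{2^c} ⋊ A` of the wreath product
`H ≀ A`, consisting of the pairs `(f, a)` with `f v ∈ R'` for all `v ∈ A`. -/
def fullWreathSubgroup (H : Type*) [Group H] (c : ℕ) (R' : Subgroup H) :
    Subgroup (WreathProd H c) where
  carrier := {x | ∀ v : EA c, x.left v ∈ R'}
  one_mem' := fun v => by
    rw [SemidirectProduct.one_left]
    exact R'.one_mem
  mul_mem' := by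
    intro x y hx hy v
    rw [SemidirectProduct.mul_left]
    exact R'.mul_mem (hx v) (hy _)
  inv_mem' := by
    intro x hx v
    rw [SemidirectProduct.inv_left]
    exact R'.inv_mem (hx _)

/-!
Radical `p`-subgroups `Q` of a finite group are exactly the `p`-subgroups containing every
`p`-subgroup `P` with `N(Q) ≤ N(P)`.

Let `K = ∏_{v ∈ A} H` and let `D_v` be the projections of `R ∩ K` to the coordinates. Elements of
`N(R)` permute the `D_v` up to conjugation in `H`, so `∏ D_v` is a `2`-subgroup normalized by
`N(R)` and hence `R ∩ K = ∏ D_v`. Pick `s_a ∈ R` over each `a ∈ A` and conjugate by the base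
element with coordinates `(s_v)(v)⁻¹`; then every `s_a` lands in `(∏ D_v) a`, so `A ≤ R`. Now `A`
permutes the `D_v` transitively, so they all equal one `Q`, and `R = Q^A ⋊ A`. Finally `Q` is
radical: a `2`-subgroup `P` of `H` with `N_H(Q) ≤ N_H(P)` yields the `2`-subgroup `P^A`, which
is normalized by `N(Q^A ⋊ A)` because the coordinates of its elements normalize `Q`.
-/

open Subgroup SemidirectProduct

section RadicalSubgroup

variable {p : ℕ} {G : Type*} [Group G]

theorem IsPGroup.subgroupPi {ι : Type*} [Finite ι] {M : ι → Type*} [∀ i, Group (M i)]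
    {D : ∀ i, Subgroup (M i)} (h : ∀ i, IsPGroup p (D i)) :
    IsPGroup p (Subgroup.pi Set.univ D) := by
  cases nonempty_fintype ι
  intro g
  choose k hk using fun i => h i ⟨g.1 i, g.2 i trivial⟩
  refine ⟨Finset.univ.sup k, Subtype.ext (funext fun i => ?_)⟩
  obtain ⟨m, hm⟩ := pow_dvd_pow p (Finset.le_sup (Finset.mem_univ i) : k i ≤ _)
  have hki : g.1 i ^ p ^ k i = 1 := congrArg Subtype.val (hk i)
  simp only [SubgroupClass.coe_pow, Pi.pow_apply, OneMemClass.coe_one, Pi.one_apply, hm, pow_mul,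
    hki, one_pow]

theorem pCore'_normal : (pCore' p G).Normal :=
  sSup_normal _ fun _ h => h.1

theorem le_pCore' {N : Subgroup G} [N.Normal] (h : IsPGroup p N) : N ≤ pCore' p G :=
  le_sSup ⟨inferInstance, h⟩

theorem isPGroup_pCore' [Fact p.Prime] [Finite G] : IsPGroup p (pCore' p G) :=
  let S : Sylow p G := default
  S.isPGroup'.to_le <| sSup_le fun _ ⟨_, hN⟩ => hN.le_sylow_of_normal S

theorem IsRadicalPSubgroup.isPGroup [Fact p.Prime] [Finite G] {Q : Subgroup G}
    (hQ : IsRadicalPSubgroup p Q) : IsPGroup p Q := by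
  have h : IsPGroup p (Q.subgroupOf (normalizer (Q : Set G))) := hQ ▸ isPGroup_pCore'
  exact h.of_equiv (subgroupOfEquivOfLe le_normalizer)

theorem IsRadicalPSubgroup.le_of_le_normalizer [Fact p.Prime] [Finite G] {Q X : Subgroup G}
    (hQ : IsRadicalPSubgroup p Q) (hXp : IsPGroup p X) (hX : X ≤ normalizer (Q : Set G))
    (hN : normalizer (Q : Set G) ≤ normalizer (X : Set G)) : X ≤ Q := by
  have := (normal_subgroupOf_iff_le_normalizer hX).mpr hN
  have h : X.subgroupOf (normalizer (Q : Set G)) ≤ Q.subgroupOf (normalizer (Q : Set G)) :=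
    hQ ▸ le_pCore' hXp.comap_subtype
  intro x hx
  exact h (x := ⟨x, hX hx⟩) hx

theorem isRadicalPSubgroup_iff [Fact p.Prime] [Finite G] {Q : Subgroup G} :
    IsRadicalPSubgroup p Q ↔ IsPGroup p Q ∧ ∀ P : Subgroup G, IsPGroup p P →
      normalizer (Q : Set G) ≤ normalizer (P : Set G) → P ≤ Q := by
  constructor
  · intro hQ
    refine ⟨hQ.isPGroup, fun P hP hN => ?_⟩
    set T := Q ⊔ P
    have hTp : IsPGroup p T := hQ.isPGroup.to_sup_of_normal_right' hP (le_normalizer.trans hN)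
    -- `N_T(Q) = T ⊓ N(Q)` is a `p`-subgroup normalized by `N(Q)`, so radicality keeps it in `Q`;
    -- in the nilpotent group `T` this forces `Q = T`.
    have hTN : T ⊓ normalizer (Q : Set G) ≤ Q :=
      hQ.le_of_le_normalizer (hTp.to_le inf_le_left) inf_le_right
        ((le_inf (normalizer_le_normalizer_sup_of_normalizer_le_left hN) le_normalizer).trans
          inf_normalizer_le_normalizer_inf)
    have := hTp.isNilpotent
    have hself : normalizer ((Q.subgroupOf T : Subgroup T) : Set T) = Q.subgroupOf T := by
      rw [← subgroupOf_normalizer_eq le_sup_left]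
      refine le_antisymm (fun x hx => hTN ⟨x.2, hx⟩) fun _ hx => le_normalizer hx
    have hQT := normalizerCondition_iff_only_full_group_self_normalizing.mp
      Group.normalizerCondition_of_isNilpotent _ hself
    exact le_sup_right.trans (subgroupOf_eq_top.mp hQT)
  · rintro ⟨hQp, hmax⟩
    refine le_antisymm (le_pCore' hQp.comap_subtype) ?_
    have : (pCore' p (normalizer (Q : Set G))).Normal := pCore'_normal
    have hO := hmax ((pCore' p _).map (normalizer (Q : Set G)).subtype) (isPGroup_pCore'.map _) <|
      le_normalizer_iff.mpr fun n hn _ ⟨k, hk, hkn⟩ =>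
        hkn ▸ ⟨⟨n, hn⟩ * k * ⟨n, hn⟩⁻¹, Normal.conj_mem ‹_› k hk _, rfl⟩
    exact map_le_iff_le_comap.mp hO

theorem IsRadicalPSubgroup.map_mulEquiv [Fact p.Prime] [Finite G] {G' : Type*} [Group G']
    {Q : Subgroup G} (hQ : IsRadicalPSubgroup p Q) (e : G ≃* G') :
    IsRadicalPSubgroup p (Q.map e.toMonoidHom) := by
  have : Finite G' := Finite.of_equiv G e.toEquiv
  rw [isRadicalPSubgroup_iff] at hQ ⊢
  refine ⟨hQ.1.map _, fun P hP hN => ?_⟩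
  rw [← map_equiv_normalizer_eq] at hN
  have h := hQ.2 (P.map e.symm.toMonoidHom) (hP.map _) <| by
    rw [← map_equiv_normalizer_eq]
    exact fun x hx => ⟨e x, hN ⟨x, hx, rfl⟩, e.symm_apply_apply x⟩
  exact fun x hx => ⟨e.symm x, h ⟨x, hx, rfl⟩, e.apply_symm_apply x⟩

end RadicalSubgroup

namespace EA

variable {c : ℕ}

@[simp]
theorem inv_eq_self (a : EA c) : a⁻¹ = a :=
  funext fun i => by
    change (a i)⁻¹ = a i
    generalize a i = x
    revert x
    decide

@[simp]
theorem mul_self (a : EA c) : a * a = 1 := by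
  simpa using mul_inv_cancel a

@[simp]
theorem mul_mul_cancel_left (a v : EA c) : a * (a * v) = v := by
  rw [← mul_assoc, mul_self, one_mul]

end EA

namespace WreathProd

variable {H : Type*} [Group H] {c : ℕ} {p : ℕ}

instance [Finite H] : Finite (WreathProd H c) :=
  Finite.of_injective (fun x => (x.left, x.right))
    fun _ _ h => SemidirectProduct.ext (congrArg Prod.fst h) (congrArg Prod.snd h)

@[simp]
theorem mul_left_apply (x y : WreathProd H c) (v : EA c) :
    (x * y).left v = x.left v * y.left (x.right * v) := by
  simp [wreathAct]

@[simp]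
theorem inv_left_apply (x : WreathProd H c) (v : EA c) :
    x⁻¹.left v = (x.left (x.right * v))⁻¹ := by
  simp [wreathAct]

theorem conj_inl (n : WreathProd H c) (f : EA c → H) :
    n * inl f * n⁻¹ = inl fun v => n.left v * f (n.right * v) * (n.left v)⁻¹ := by
  refine SemidirectProduct.ext (funext fun v => ?_) ?_ <;> simp

def baseSubgroup (D : EA c → Subgroup H) : Subgroup (WreathProd H c) :=
  (Subgroup.pi Set.univ D).map inl

def coordProj (R : Subgroup (WreathProd H c)) (v : EA c) : Subgroup H :=
  (R.comap inl).map (Pi.evalMonoidHom (fun _ => H) v)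

theorem inl_mem_baseSubgroup {D : EA c → Subgroup H} {f : EA c → H} (hf : ∀ v, f v ∈ D v) :
    inl f ∈ baseSubgroup D :=
  mem_map_of_mem _ fun v _ => hf v

theorem left_mem_coordProj {R : Subgroup (WreathProd H c)} {x : WreathProd H c} (hx : x ∈ R)
    (h1 : x.right = 1) (v : EA c) : x.left v ∈ coordProj R v :=
  ⟨x.left, show inl x.left ∈ R from (SemidirectProduct.ext rfl h1.symm : inl x.left = x) ▸ hx, rfl⟩

theorem isPGroup_baseSubgroup {D : EA c → Subgroup H} (h : ∀ v, IsPGroup p (D v)) :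
    IsPGroup p (baseSubgroup D) :=
  (IsPGroup.subgroupPi h).map _

theorem isPGroup_coordProj {R : Subgroup (WreathProd H c)} (hR : IsPGroup p R)
    (v : EA c) : IsPGroup p (coordProj R v) :=
  (hR.comap_of_injective _ inl_injective).map _

theorem conj_mem_coordProj {R : Subgroup (WreathProd H c)} {n : WreathProd H c}
    (hn : n ∈ normalizer (R : Set (WreathProd H c))) {v : EA c} {h : H}
    (hh : h ∈ coordProj R (n.right * v)) : n.left v * h * (n.left v)⁻¹ ∈ coordProj R v := by
  obtain ⟨f, hf, rfl⟩ := hh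
  have hconj : n * inl f * n⁻¹ ∈ R := (mem_normalizer_iff.mp hn _).mp hf
  rw [conj_inl] at hconj
  exact ⟨_, hconj, rfl⟩

theorem le_normalizer_baseSubgroup {N : Subgroup (WreathProd H c)} {D : EA c → Subgroup H}
    (hN : ∀ n ∈ N, ∀ v, ∀ h ∈ D (n.right * v), n.left v * h * (n.left v)⁻¹ ∈ D v) :
    N ≤ normalizer (baseSubgroup D : Set (WreathProd H c)) := by
  refine le_normalizer_iff.mpr ?_
  rintro n hn _ ⟨f, hf, rfl⟩
  rw [conj_inl]
  exact inl_mem_baseSubgroup fun v => hN n hn v _ (hf _ trivial)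

theorem baseSubgroup_coordProj_le [Finite H] [Fact p.Prime] {R : Subgroup (WreathProd H c)}
    (hR : IsRadicalPSubgroup p R) : baseSubgroup (coordProj R) ≤ R :=
  (isRadicalPSubgroup_iff.mp hR).2 _ (isPGroup_baseSubgroup (isPGroup_coordProj hR.isPGroup))
    (le_normalizer_baseSubgroup fun _ hn _ _ hh => conj_mem_coordProj hn hh)

theorem inr_right_mem {R : Subgroup (WreathProd H c)} (hbase : baseSubgroup (coordProj R) ≤ R)
    {r : WreathProd H c} (hr : r ∈ R) (hleft : ∀ v, r.left v ∈ coordProj R v) :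
    inr r.right ∈ R := by
  have hinl : inl r.left ∈ R := hbase (inl_mem_baseSubgroup hleft)
  rw [← inv_mul_eq_iff_eq_mul.mpr (inl_left_mul_inr_right r).symm]
  exact mul_mem (inv_mem hinl) hr

theorem coordProj_eq_of_inr_mem {R : Subgroup (WreathProd H c)} (hA : ∀ a, inr a ∈ R)
    (v : EA c) : coordProj R v = coordProj R 1 := by
  have hle : ∀ a w, coordProj R (a * w) ≤ coordProj R w := fun a w h hh => by
    simpa using conj_mem_coordProj (le_normalizer (hA a)) (h := h) (by simpa using hh)
  exact le_antisymm (by simpa using hle v 1) (by simpa using hle v v)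

theorem eq_fullWreathSubgroup {R : Subgroup (WreathProd H c)}
    (hbase : baseSubgroup (coordProj R) ≤ R) (hA : ∀ a, inr a ∈ R) :
    R = fullWreathSubgroup H c (coordProj R 1) := by
  ext x
  constructor
  · intro hx v
    have hinl : inl x.left ∈ R := by
      rw [← mul_inv_eq_iff_eq_mul.mpr (inl_left_mul_inr_right x).symm]
      exact mul_mem hx (inv_mem (hA _))
    simpa [coordProj_eq_of_inr_mem hA v] using left_mem_coordProj hinl rfl v
  · intro hx
    rw [← inl_left_mul_inr_right x]
    refine mul_mem (hbase (inl_mem_baseSubgroup fun v => ?_)) (hA _)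
    simpa [coordProj_eq_of_inr_mem hA v] using hx v

theorem coordProj_fullWreathSubgroup (Q : Subgroup H) (v : EA c) :
    coordProj (fullWreathSubgroup H c Q) v = Q :=
  le_antisymm (fun _ ⟨_, hf, hfv⟩ => hfv ▸ hf v) fun h hh => ⟨fun _ => h, fun _ => hh, rfl⟩

theorem _root_.IsRadicalPSubgroup.of_fullWreathSubgroup [Finite H] [Fact p.Prime]
    {Q : Subgroup H} (hR : IsRadicalPSubgroup p (fullWreathSubgroup H c Q)) :
    IsRadicalPSubgroup p Q := by
  have hdiag : ∀ h : H, inl (fun _ => h) ∈ fullWreathSubgroup H c Q ↔ h ∈ Q := fun h =>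
    ⟨fun hh => hh 1, fun hh _ => hh⟩
  rw [isRadicalPSubgroup_iff] at hR ⊢
  refine ⟨?_, fun P hP hN => ?_⟩
  · exact (hR.1.comap_of_injective (inl.comp (Pi.constMonoidHom (EA c) H))
      (inl_injective.comp fun _ _ h => congrFun h 1)).to_le fun h hh => (hdiag h).mpr hh
  · have hbase : baseSubgroup (fun _ => P) ≤ fullWreathSubgroup H c Q := by
      refine hR.2 _ (isPGroup_baseSubgroup fun _ => hP) (le_normalizer_baseSubgroup ?_)
      intro n hn v h hh
      have hnQ : n.left v ∈ normalizer (Q : Set H) := mem_normalizer_fintype fun q hq => by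
        simpa [coordProj_fullWreathSubgroup] using
          conj_mem_coordProj hn (v := v) (h := q) (by rwa [coordProj_fullWreathSubgroup])
      exact (mem_normalizer_iff.mp (hN hnQ) h).mp hh
    exact fun h hh => (hdiag h).mp (hbase (inl_mem_baseSubgroup fun _ => hh))

def sectionCorrection (s : EA c → WreathProd H c) : WreathProd H c :=
  inl fun v => ((s v).left v)⁻¹

/-- After conjugation, the `v`-coordinate of `s a` agrees with that of
`s a * s (a * v) * (s v)⁻¹`, an element of `R ∩ K`. -/
theorem conj_sectionCorrection_left_mem {R : Subgroup (WreathProd H c)}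
    {s : EA c → WreathProd H c} (hsR : ∀ a, s a ∈ R) (hs : ∀ a, (s a).right = a) (a v : EA c) :
    (MulAut.conj (sectionCorrection s) (s a)).left v ∈
      coordProj (R.map (MulAut.conj (sectionCorrection s)).toMonoidHom) v := by
  have hy : s a * s (a * v) * (s v)⁻¹ ∈ R := mul_mem (mul_mem (hsR a) (hsR _)) (inv_mem (hsR v))
  have hleft :=
    left_mem_coordProj (mem_map_of_mem (MulAut.conj (sectionCorrection s)).toMonoidHom hy)
      (by simp [hs]) v
  convert hleft using 1
  simp only [sectionCorrection, MulAut.conj_apply, MulEquiv.toMonoidHom_eq_coe, MonoidHom.coe_coe,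
    mul_left_apply, inv_left_apply, left_inl, right_inl, mul_right, inv_right, hs, inv_inv, one_mul,
    mul_one, EA.inv_eq_self, EA.mul_self, EA.mul_mul_cancel_left]
  group

end WreathProd

open WreathProd

theorem statement_6_general (H : Type*) [Group H] [Finite H] (c : ℕ)
    (R : Subgroup (WreathProd H c))
    (hR : IsRadicalPSubgroup 2 R)
    (hproj : R.map SemidirectProduct.rightHom = ⊤) :
    ∃ (g : WreathProd H c) (R' : Subgroup H), IsRadicalPSubgroup 2 R' ∧
      R.map (MulAut.conj g).toMonoidHom = fullWreathSubgroup H c R' := by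
  have hsection : ∀ a, ∃ r ∈ R, r.right = a := fun a => mem_map.mp (hproj ▸ mem_top a)
  choose s hsR hs using hsection
  set g := sectionCorrection s
  have hR₂ : IsRadicalPSubgroup 2 (R.map (MulAut.conj g).toMonoidHom) := hR.map_mulEquiv _
  have hbase := baseSubgroup_coordProj_le hR₂
  have hA : ∀ a, inr a ∈ R.map (MulAut.conj g).toMonoidHom := fun a => by
    have hright : (MulAut.conj g (s a)).right = a := by simp [g, sectionCorrection, hs]
    exact hright ▸ inr_right_mem hbase (mem_map_of_mem _ (hsR a))
      (conj_sectionCorrection_left_mem hsR hs a)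
  have hfull := eq_fullWreathSubgroup hbase hA
  exact ⟨g, _, (hfull ▸ hR₂).of_fullWreathSubgroup, hfull⟩

/-- Let `H` be a finite group, `c ≥ 1`, and let `G = H ≀ A` be the regular wreath product with
`A = (Z/2Z)^c`.  If `R` is a radical `2`-subgroup of `G` whose image under the canonical
projection `G → A` is all of `A`, then `R` is conjugate to `(R')^{2^c} ⋊ A` for some radical
`2`-subgroup `R'` of `H`. -/
theorem statement_6 (H : Type*) [Group H] [Finite H] (c : ℕ) (hc : 1 ≤ c)
    (R : Subgroup (WreathProd H c))
    (hR : IsRadicalPSubgroup 2 R)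
    (hproj : R.map SemidirectProduct.rightHom = ⊤) :
    ∃ (g : WreathProd H c) (R' : Subgroup H), IsRadicalPSubgroup 2 R' ∧
      R.map (MulAut.conj g).toMonoidHom = fullWreathSubgroup H c R' :=
  statement_6_general H c R hR hproj
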